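/- arXiv:0904.3587 — 2 statements merged into one kernel-verified Lean document; each statement's English description precedes it below -/
import Mathlib

section
/- With T_k as above, for all y, z ≥ 0 and real γ ≥ 1: (y^γ − z^γ)(T_k(y) − T_k(z)) ≥ |T_k(y) − T_k(z)|^{γ+1}. -/
/-!
For `z ≤ y` put `d = T_k(y) - T_k(z)`. Monotonicity and the `1`-Lipschitz bound give
`0 ≤ d ≤ y - z`, and superadditivity of `t ↦ t^γ` gives `(y - z)^γ ≤ y^γ - z^γ`, so
`d^(γ+1) = d^γ d ≤ (y - z)^γ d ≤ (y^γ - z^γ) d`. The case `y ≤ z` follows by symmetry.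
-/

lemma Real.sub_rpow_le_rpow_sub_rpow {γ y z : ℝ} (hz : 0 ≤ z) (hzy : z ≤ y) (hγ : 1 ≤ γ) :
    (y - z) ^ γ ≤ y ^ γ - z ^ γ := by
  have h := Real.add_rpow_le_rpow_add (sub_nonneg.2 hzy) hz hγ
  rw [sub_add_cancel] at h
  linarith

lemma Real.rpow_add_one_le_mul_of_le_sub {γ d y z : ℝ} (hd : 0 ≤ d) (hdyz : d ≤ y - z)
    (hz : 0 ≤ z) (hγ : 1 ≤ γ) : d ^ (γ + 1) ≤ (y ^ γ - z ^ γ) * d := by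
  have hzy : z ≤ y := by linarith
  calc d ^ (γ + 1) = d ^ γ * d := by rw [Real.rpow_add' hd (by linarith), Real.rpow_one]
    _ ≤ (y - z) ^ γ * d := by gcongr
    _ ≤ (y ^ γ - z ^ γ) * d := by gcongr; exact Real.sub_rpow_le_rpow_sub_rpow hz hzy hγ

lemma abs_sub_rpow_add_one_le_of_monotone_of_lipschitzWith_one {f : ℝ → ℝ} (hf : Monotone f)
    (hL : LipschitzWith 1 f) {γ y z : ℝ} (hy : 0 ≤ y) (hz : 0 ≤ z) (hγ : 1 ≤ γ) :
    |f y - f z| ^ (γ + 1) ≤ (y ^ γ - z ^ γ) * (f y - f z) := by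
  wlog hzy : z ≤ y generalizing y z
  · rw [abs_sub_comm, ← neg_sub (z ^ γ), ← neg_sub (f z), neg_mul_neg]
    exact this hz hy (le_of_not_ge hzy)
  have hd : 0 ≤ f y - f z := sub_nonneg.2 (hf hzy)
  have hdyz : f y - f z ≤ y - z := by
    simpa [Real.dist_eq, abs_of_nonneg hd, abs_of_nonneg (sub_nonneg.2 hzy)]
      using hL.dist_le_mul y z
  rw [abs_of_nonneg hd]
  exact Real.rpow_add_one_le_mul_of_le_sub hd hdyz hz hγ

lemma Monotone.const_mul_comp_div {T : ℝ → ℝ} (hT : Monotone T) {k : ℝ} (hk : 0 < k) :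
    Monotone fun z => k * T (z / k) :=
  fun _ _ h => mul_le_mul_of_nonneg_left (hT (div_le_div_of_nonneg_right h hk.le)) hk.le

lemma LipschitzWith.const_mul_comp_div {T : ℝ → ℝ} (hT : LipschitzWith 1 T) {k : ℝ}
    (hk : 0 < k) : LipschitzWith 1 fun z => k * T (z / k) := by
  refine LipschitzWith.of_dist_le_mul fun a b => ?_
  have h := hT.dist_le_mul (a / k) (b / k)
  simp only [Real.dist_eq, NNReal.coe_one, one_mul] at h ⊢
  calc |k * T (a / k) - k * T (b / k)| = k * |T (a / k) - T (b / k)| := by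
        rw [← mul_sub, abs_mul, abs_of_pos hk]
    _ ≤ k * |a / k - b / k| := by gcongr
    _ = |a - b| := by rw [← sub_div, abs_div, abs_of_pos hk]; field_simp

theorem stmt_4_general (T : ℝ → ℝ) (hC1 : ContDiff ℝ 1 T)
    (hder : ∀ z : ℝ, 0 ≤ deriv T z ∧ deriv T z ≤ 1)
    (k : ℝ) (hk : 0 < k) (γ : ℝ) (hγ : 1 ≤ γ) :
    ∀ y z : ℝ, 0 ≤ y → 0 ≤ z →
      |k * T (y / k) - k * T (z / k)| ^ (γ + 1) ≤
        (y ^ γ - z ^ γ) * (k * T (y / k) - k * T (z / k)) := by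
  have hdiff : Differentiable ℝ T := hC1.differentiable one_ne_zero
  have hmono : Monotone T := monotone_of_deriv_nonneg hdiff fun z => (hder z).1
  have hlip : LipschitzWith 1 T := lipschitzWith_of_nnnorm_deriv_le hdiff fun z => by
    rw [← NNReal.coe_le_coe, coe_nnnorm, Real.norm_of_nonneg (hder z).1]
    exact (hder z).2
  intro y z hy hz
  exact abs_sub_rpow_add_one_le_of_monotone_of_lipschitzWith_one
    (hmono.const_mul_comp_div hk) (hlip.const_mul_comp_div hk) hy hz hγ

theorem stmt_4 (T : ℝ → ℝ) (hC1 : ContDiff ℝ 1 T)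
    (hconc : ConcaveOn ℝ Set.univ T)
    (hid : ∀ z : ℝ, z ≤ 1 → T z = z)
    (htop : ∀ z : ℝ, 3 ≤ z → T z = 2)
    (hder : ∀ z : ℝ, 0 ≤ deriv T z ∧ deriv T z ≤ 1)
    (k : ℝ) (hk : 0 < k) (γ : ℝ) (hγ : 1 ≤ γ) :
    ∀ y z : ℝ, 0 ≤ y → 0 ≤ z →
      |k * T (y / k) - k * T (z / k)| ^ (γ + 1) ≤
        (y ^ γ - z ^ γ) * (k * T (y / k) - k * T (z / k)) :=
  stmt_4_general T hC1 hder k hk γ hγ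
end

section
/- Let (X, μ) be a finite measure space and ρ_n ≥ 0 with ρ_n → ρ weakly in L¹(μ) and ρ_n ln ρ_n → g weakly in L¹(μ). Then g ≥ ρ ln ρ a.e., and if moreover ∫ g dμ = ∫ ρ ln ρ dμ, then ρ_n → ρ in measure (hence a.e. along a subsequence) — in particular g = ρ ln ρ forces strong convexity identification since z ↦ z ln z is strictly convex. -/
open MeasureTheory Filter

/-!
Everything rests on the tangent lines of the convex function `z log z`. Each tangent inequality
`(log q + 1) z - q ≤ z log z` is affine in `z`, so it passes to weak limits, and the supremum
over rational `q > 0` gives `ρ log ρ ≤ g`.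

Once `g = ρ log ρ` a.e., the Bregman divergence
`ρₙ log ρₙ - ρ log ρ - (log ρ + 1) (ρₙ - ρ)` has integral tending to `0` over every set on which
`log ρ` is bounded, since there `log ρ + 1` is an admissible test function. The divergence
dominates `(√ρₙ - √ρ)²`, which is bounded below on `{|ρₙ - ρ| ≥ ε}`, so Markov's inequality gives
convergence in measure on such sets. On `{ρ = 0}` the same follows from `∫ ρₙ → 0`, and these
sets exhaust `X`.
-/

open Real Set Topology

namespace Real

noncomputable def mulLogBregman (a b : ℝ) : ℝ := b * log b - a * log a - (log a + 1) * (b - a)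

theorem mulLogBregman_eq (a b : ℝ) : mulLogBregman a b = b * log b - b * (log a + 1) + a := by
  unfold mulLogBregman; ring

theorem sq_sqrt_sub_sqrt_le_mulLogBregman {a b : ℝ} (ha : 0 < a) (hb : 0 ≤ b) :
    (√b - √a) ^ 2 ≤ mulLogBregman a b := by
  have hlog : b * (log a - log b) ≤ 2 * (√a * √b - b) := by
    rcases hb.eq_or_lt with rfl | hb
    · simp
    have hsa := sqrt_pos.2 ha
    have hsb := sqrt_pos.2 hb
    have h := log_le_sub_one_of_pos (div_pos hsa hsb)
    rw [log_div hsa.ne' hsb.ne', log_sqrt ha.le, log_sqrt hb.le] at h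
    have hb' : b * (√a / √b) = √a * √b := by
      rw [mul_div_assoc', div_eq_iff hsb.ne', mul_assoc, mul_self_sqrt hb.le, mul_comm]
    nlinarith
  rw [mulLogBregman]
  nlinarith [sq_sqrt ha.le, sq_sqrt hb]

theorem mulLogBregman_nonneg {a b : ℝ} (ha : 0 < a) (hb : 0 ≤ b) : 0 ≤ mulLogBregman a b :=
  (sq_nonneg _).trans (sq_sqrt_sub_sqrt_le_mulLogBregman ha hb)

theorem add_one_mul_sub_le_mul_log {q z : ℝ} (hq : 0 < q) (hz : 0 ≤ z) :
    (log q + 1) * z - q ≤ z * log z := by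
  linarith [mulLogBregman_nonneg hq hz, mulLogBregman_eq q z]

theorem mul_log_le_of_forall_rat_tangent_le {z y : ℝ} (hz : 0 ≤ z)
    (h : ∀ q : ℚ, 0 < q → (log q + 1) * z - q ≤ y) : z * log z ≤ y := by
  by_contra! hy
  have hcont : ContinuousAt (fun t => (log t + 1) * z - t) z := by
    rcases hz.eq_or_lt with rfl | hz
    · simpa using continuous_neg.continuousAt
    · exact ((continuousAt_log hz.ne').add continuousAt_const).mul continuousAt_const |>.sub
        continuousAt_id
  have hval : (log z + 1) * z - z = z * log z := by ring
  obtain ⟨u, hzu, hu⟩ := exists_Ico_subset_of_mem_nhds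
    (hcont.eventually (lt_mem_nhds (hval ▸ hy))) ⟨z + 1, by linarith⟩
  obtain ⟨q, hzq, hqu⟩ := exists_rat_btwn hzu
  exact (h q (by exact_mod_cast hz.trans_lt hzq)).not_gt (hu ⟨hzq.le, hqu⟩)

theorem sq_sqrt_add_sub_sqrt_le {a b M ε : ℝ} (ha : 0 ≤ a) (haM : a ≤ M) (hb : 0 ≤ b)
    (hε : 0 ≤ ε) (hab : ε ≤ |b - a|) : (√(M + ε) - √M) ^ 2 ≤ (√b - √a) ^ 2 := by
  set t := |√b - √a|
  have hM : 0 ≤ M := ha.trans haM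
  have hdiff : |b - a| = t * (√b + √a) := by
    rw [← abs_of_nonneg (by positivity : 0 ≤ √b + √a), ← abs_mul]
    congr 1
    nlinarith [sq_sqrt ha, sq_sqrt hb]
  have hsum : √b + √a ≤ 2 * √M + t := by
    have := le_abs_self (√b - √a)
    have := sqrt_le_sqrt haM
    linarith
  have ht : √(M + ε) ≤ √M + t := by
    rw [sqrt_le_left (by positivity)]
    nlinarith [sq_sqrt hM, abs_nonneg (√b - √a)]
  have h0 : 0 ≤ √(M + ε) - √M := sub_nonneg.2 (sqrt_le_sqrt (by linarith))
  calc (√(M + ε) - √M) ^ 2 ≤ t ^ 2 := pow_le_pow_left₀ h0 (by linarith) 2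
    _ = (√b - √a) ^ 2 := sq_abs _

end Real

namespace MeasureTheory

variable {X ι E : Type*} [MeasurableSpace X] {μ : Measure X} {l : Filter ι}

theorem tendstoInMeasure_of_tendsto_integral [IsFiniteMeasure μ] {f D : ι → X → ℝ} {F : X → ℝ}
    (hD0 : ∀ i, 0 ≤ᵐ[μ] D i) (hDi : ∀ i, Integrable (D i) μ)
    (hD : Tendsto (fun i => ∫ x, D i x ∂μ) l (𝓝 0))
    (hgap : ∀ ε > 0, ∃ η > 0, ∀ i, ∀ᵐ x ∂μ, ε ≤ dist (f i x) (F x) → η ≤ D i x) :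
    TendstoInMeasure μ f l F := by
  rw [tendstoInMeasure_iff_measureReal_dist]
  intro ε hε
  obtain ⟨η, hη, hD_ge⟩ := hgap ε hε
  refine squeeze_zero (fun _ => measureReal_nonneg) (fun i => ?_) (by simpa using hD.div_const η)
  calc μ.real {x | ε ≤ dist (f i x) (F x)} ≤ μ.real {x | η ≤ D i x} :=
        ENNReal.toReal_mono (measure_ne_top _ _) (measure_mono_ae ((hD_ge i).mono fun _ hx => hx))
    _ ≤ (∫ x, D i x ∂μ) / η := by
        rw [le_div_iff₀ hη, mul_comm]
        exact mul_meas_ge_le_integral_of_nonneg (hD0 i) (hDi i) η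

theorem TendstoInMeasure.restrict_union [EDist E] {f : ι → X → E} {F : X → E} {s t : Set X}
    (hs : TendstoInMeasure (μ.restrict s) f l F) (ht : TendstoInMeasure (μ.restrict t) f l F) :
    TendstoInMeasure (μ.restrict (s ∪ t)) f l F := fun ε hε =>
  tendsto_of_tendsto_of_tendsto_of_le_of_le tendsto_const_nhds
    (by simpa using (hs ε hε).add (ht ε hε)) (fun _ => bot_le)
    fun _ => Measure.restrict_union_le s t _

theorem tendstoInMeasure_of_forall_restrict [IsFiniteMeasure μ] [EDist E] {f : ι → X → E}
    {F : X → E} {s : ℕ → Set X} (hsm : ∀ k, MeasurableSet (s k)) (hmono : Monotone s)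
    (hcover : ⋃ k, s k = univ) (h : ∀ k, TendstoInMeasure (μ.restrict (s k)) f l F) :
    TendstoInMeasure μ f l F := by
  have hsmall : Tendsto (fun k => μ (s k)ᶜ) atTop (𝓝 0) := by
    have := tendsto_measure_iInter_atTop (fun k => (hsm k).compl.nullMeasurableSet)
      (fun _ _ hjk => compl_subset_compl.2 (hmono hjk)) ⟨0, measure_ne_top μ _⟩
    rwa [← compl_iUnion, hcover, compl_univ, measure_empty] at this
  intro ε hε
  rw [ENNReal.tendsto_nhds_zero]
  intro δ hδ
  obtain ⟨k, hk⟩ :=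
    (ENNReal.tendsto_nhds_zero.1 hsmall (δ / 2) (ENNReal.half_pos hδ.ne')).exists
  filter_upwards [ENNReal.tendsto_nhds_zero.1 (h k ε hε) (δ / 2) (ENNReal.half_pos hδ.ne')]
    with i hi
  calc μ {x | ε ≤ edist (f i x) (F x)}
      = μ.restrict (s k) {x | ε ≤ edist (f i x) (F x)}
        + μ.restrict (s k)ᶜ {x | ε ≤ edist (f i x) (F x)} := by
        rw [← Measure.add_apply, Measure.restrict_add_restrict_compl (hsm k)]
    _ ≤ δ / 2 + δ / 2 := by
        gcongr
        exact (measure_mono (subset_univ _)).trans_eq (Measure.restrict_apply_univ _) |>.trans hk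
    _ = δ := ENNReal.add_halves δ

def TendstoWeakly (μ : Measure X) (f : ι → X → ℝ) (l : Filter ι) (F : X → ℝ) : Prop :=
  ∀ φ : X → ℝ, Measurable φ → (∃ B : ℝ, ∀ x, |φ x| ≤ B) →
    Tendsto (fun i => ∫ x, f i x * φ x ∂μ) l (𝓝 (∫ x, F x * φ x ∂μ))

namespace TendstoWeakly

variable {f h ρ : ι → X → ℝ} {F H ρ₀ g : X → ℝ}

theorem tendsto_setIntegral_mul (hf : TendstoWeakly μ f l F) {s : Set X} (hs : MeasurableSet s)
    {w : X → ℝ} (hw : Measurable w) (hwb : ∃ B, ∀ x ∈ s, |w x| ≤ B) :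
    Tendsto (fun i => ∫ x in s, f i x * w x ∂μ) l (𝓝 (∫ x in s, F x * w x ∂μ)) := by
  obtain ⟨B, hB⟩ := hwb
  have hind : ∀ u : X → ℝ, ∫ x, u x * s.indicator w x ∂μ = ∫ x in s, u x * w x ∂μ := by
    intro u
    simp only [← Set.indicator_mul_right, integral_indicator hs]
  have hbound : ∀ x, |s.indicator w x| ≤ |B| := by
    intro x
    by_cases hx : x ∈ s
    · simpa [hx] using (hB x hx).trans (le_abs_self B)
    · simp [hx]
  simpa only [hind] using hf _ (hw.indicator hs) ⟨|B|, hbound⟩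

theorem tendsto_setIntegral (hf : TendstoWeakly μ f l F) {s : Set X} (hs : MeasurableSet s) :
    Tendsto (fun i => ∫ x in s, f i x ∂μ) l (𝓝 (∫ x in s, F x ∂μ)) := by
  simpa using hf.tendsto_setIntegral_mul hs measurable_const ⟨1, fun _ _ => (abs_one).le⟩

theorem const_mul_sub_const [IsFiniteMeasure μ] (hf : TendstoWeakly μ f l F)
    (hfi : ∀ i, Integrable (f i) μ) (hFi : Integrable F μ) (a b : ℝ) :
    TendstoWeakly μ (fun i x => a * f i x - b) l (fun x => a * F x - b) := by
  intro φ hφ ⟨B, hB⟩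
  have hφi : Integrable φ μ := .of_bound hφ.aestronglyMeasurable B (ae_of_all _ hB)
  have hexpand : ∀ u : X → ℝ, Integrable u μ →
      ∫ x, (a * u x - b) * φ x ∂μ = a * ∫ x, u x * φ x ∂μ - b * ∫ x, φ x ∂μ := by
    intro u hu
    have huφ : Integrable (fun x => u x * φ x) μ :=
      hu.mul_bdd hφ.aestronglyMeasurable (ae_of_all _ hB)
    simp_rw [sub_mul, mul_assoc]
    rw [integral_sub (huφ.const_mul a) (hφi.const_mul b), integral_const_mul, integral_const_mul]
  simp only [hexpand _ (hfi _), hexpand F hFi]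
  exact ((hf φ hφ ⟨B, hB⟩).const_mul a).sub_const _

theorem ae_le [l.NeBot] (hf : TendstoWeakly μ f l F) (hh : TendstoWeakly μ h l H)
    (hfi : ∀ i, Integrable (f i) μ) (hhi : ∀ i, Integrable (h i) μ) (hFi : Integrable F μ)
    (hHi : Integrable H μ) (hle : ∀ i, f i ≤ᵐ[μ] h i) : F ≤ᵐ[μ] H :=
  ae_le_of_forall_setIntegral_le hFi hHi fun _ hs _ =>
    le_of_tendsto_of_tendsto' (hf.tendsto_setIntegral hs) (hh.tendsto_setIntegral hs) fun i =>
      setIntegral_mono_ae (hfi i).integrableOn (hhi i).integrableOn (hle i)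

theorem ae_mul_log_le [IsFiniteMeasure μ] [l.NeBot] (hρ : TendstoWeakly μ ρ l ρ₀)
    (hlog : TendstoWeakly μ (fun i x => ρ i x * log (ρ i x)) l g)
    (hnn : ∀ i x, 0 ≤ ρ i x) (hρ₀nn : ∀ x, 0 ≤ ρ₀ x) (hi : ∀ i, Integrable (ρ i) μ)
    (hli : ∀ i, Integrable (fun x => ρ i x * log (ρ i x)) μ) (hρ₀i : Integrable ρ₀ μ)
    (hgi : Integrable g μ) :
    ∀ᵐ x ∂μ, ρ₀ x * log (ρ₀ x) ≤ g x := by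
  have htangent : ∀ q : ℚ, ∀ᵐ x ∂μ, 0 < q → (log q + 1) * ρ₀ x - q ≤ g x := by
    intro q
    by_cases hq : (0 : ℝ) < q
    · have hle := (hρ.const_mul_sub_const hi hρ₀i (log q + 1) q).ae_le hlog
        (fun i => ((hi i).const_mul _).sub (integrable_const _)) hli
        ((hρ₀i.const_mul _).sub (integrable_const _)) hgi
        fun i => ae_of_all _ fun x => add_one_mul_sub_le_mul_log hq (hnn i x)
      filter_upwards [hle] with x hx _ using hx
    · exact ae_of_all _ fun _ hq' => absurd (Rat.cast_pos.2 hq') hq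
  filter_upwards [ae_all_iff.2 htangent] with x hx
  exact mul_log_le_of_forall_rat_tangent_le (hρ₀nn x) hx

theorem tendstoInMeasure_restrict_of_eq_zero [IsFiniteMeasure μ] (hρ : TendstoWeakly μ ρ l ρ₀)
    (hnn : ∀ i x, 0 ≤ ρ i x) (hi : ∀ i, Integrable (ρ i) μ) {Z : Set X} (hZ : MeasurableSet Z)
    (hZ0 : ∀ x ∈ Z, ρ₀ x = 0) :
    TendstoInMeasure (μ.restrict Z) ρ l ρ₀ := by
  refine tendstoInMeasure_of_tendsto_integral (μ := μ.restrict Z) (D := ρ)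
    (fun i => ae_of_all _ (hnn i)) (fun i => (hi i).restrict) ?_ fun ε hε => ⟨ε, hε, fun i => ?_⟩
  · simpa [setIntegral_eq_zero_of_forall_eq_zero hZ0] using hρ.tendsto_setIntegral hZ
  · filter_upwards [ae_restrict_mem hZ] with x hx
    rw [hZ0 x hx, dist_zero_right, norm_of_nonneg (hnn i x)]
    exact id

theorem tendstoInMeasure_restrict_of_abs_log_le [IsFiniteMeasure μ] (hρ : TendstoWeakly μ ρ l ρ₀)
    (hlog : TendstoWeakly μ (fun i x => ρ i x * log (ρ i x)) l g)
    (hg : g =ᵐ[μ] fun x => ρ₀ x * log (ρ₀ x)) (hnn : ∀ i x, 0 ≤ ρ i x) (hρ₀m : Measurable ρ₀)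
    (hi : ∀ i, Integrable (ρ i) μ) (hli : ∀ i, Integrable (fun x => ρ i x * log (ρ i x)) μ)
    (hρ₀i : Integrable ρ₀ μ) (hρ₀li : Integrable (fun x => ρ₀ x * log (ρ₀ x)) μ)
    {A : Set X} (hA : MeasurableSet A) {K : ℝ} (hAK : ∀ x ∈ A, 0 < ρ₀ x ∧ |log (ρ₀ x)| ≤ K) :
    TendstoInMeasure (μ.restrict A) ρ l ρ₀ := by
  set w : X → ℝ := fun x => log (ρ₀ x) + 1
  have hwb : ∀ x ∈ A, |w x| ≤ K + 1 := fun x hx =>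
    (abs_add_le _ _).trans (by simpa using (hAK x hx).2)
  have hwm : Measurable w := by fun_prop
  have hwi : ∀ {u : X → ℝ}, Integrable u μ → IntegrableOn (fun x => u x * w x) A μ :=
    fun hu => hu.restrict.mul_bdd hwm.aestronglyMeasurable (ae_restrict_of_forall_mem hA hwb)
  set D : ι → X → ℝ := fun i x => mulLogBregman (ρ₀ x) (ρ i x)
  have hD : ∀ i, D i = fun x => ρ i x * log (ρ i x) - ρ i x * w x + ρ₀ x :=
    fun i => funext fun x => mulLogBregman_eq _ _
  have hsubi : ∀ i, IntegrableOn (fun x => ρ i x * log (ρ i x) - ρ i x * w x) A μ :=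
    fun i => (hli i).restrict.sub (hwi (hi i))
  have hDi : ∀ i, IntegrableOn (D i) A μ := fun i => hD i ▸ (hsubi i).add hρ₀i.restrict
  have hlim : Tendsto (fun i => ∫ x in A, D i x ∂μ) l (𝓝 0) := by
    have hsplit : ∀ i, ∫ x in A, D i x ∂μ = ∫ x in A, ρ i x * log (ρ i x) ∂μ
        - ∫ x in A, ρ i x * w x ∂μ + ∫ x in A, ρ₀ x ∂μ := fun i => by
      simp only [hD i]
      rw [integral_add (hsubi i) hρ₀i.restrict, integral_sub (hli i).restrict (hwi (hi i))]
    have hρ₀w : ∫ x in A, ρ₀ x * w x ∂μ = ∫ x in A, ρ₀ x * log (ρ₀ x) ∂μ + ∫ x in A, ρ₀ x ∂μ := by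
      simp_rw [w, mul_add, mul_one]
      exact integral_add hρ₀li.restrict hρ₀i.restrict
    have hzero : ∫ x in A, g x ∂μ - ∫ x in A, ρ₀ x * w x ∂μ + ∫ x in A, ρ₀ x ∂μ = 0 := by
      rw [integral_congr_ae (ae_restrict_of_ae hg), hρ₀w]
      ring
    simp_rw [hsplit, ← hzero]
    exact ((hlog.tendsto_setIntegral hA).sub
      (hρ.tendsto_setIntegral_mul hA hwm ⟨K + 1, hwb⟩)).add_const _
  refine tendstoInMeasure_of_tendsto_integral (D := D)
    (fun i => ae_restrict_of_forall_mem hA fun x hx => mulLogBregman_nonneg (hAK x hx).1 (hnn i x))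
    hDi hlim fun ε hε => ⟨(√(exp K + ε) - √(exp K)) ^ 2, ?_, fun i => ?_⟩
  · exact pow_pos (sub_pos.2 (sqrt_lt_sqrt (exp_pos K).le (by linarith))) 2
  · filter_upwards [ae_restrict_mem hA] with x hx hdist
    have hle : ρ₀ x ≤ exp K :=
      (log_le_iff_le_exp (hAK x hx).1).1 ((le_abs_self _).trans (hAK x hx).2)
    exact (sq_sqrt_add_sub_sqrt_le (hAK x hx).1.le hle (hnn i x) hε.le (by rwa [← dist_eq])).trans
      (sq_sqrt_sub_sqrt_le_mulLogBregman (hAK x hx).1 (hnn i x))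

theorem tendstoInMeasure_of_ae_eq_mul_log [IsFiniteMeasure μ] (hρ : TendstoWeakly μ ρ l ρ₀)
    (hlog : TendstoWeakly μ (fun i x => ρ i x * log (ρ i x)) l g)
    (hg : g =ᵐ[μ] fun x => ρ₀ x * log (ρ₀ x)) (hnn : ∀ i x, 0 ≤ ρ i x) (hρ₀nn : ∀ x, 0 ≤ ρ₀ x)
    (hρ₀m : Measurable ρ₀) (hi : ∀ i, Integrable (ρ i) μ)
    (hli : ∀ i, Integrable (fun x => ρ i x * log (ρ i x)) μ) (hρ₀i : Integrable ρ₀ μ)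
    (hρ₀li : Integrable (fun x => ρ₀ x * log (ρ₀ x)) μ) :
    TendstoInMeasure μ ρ l ρ₀ := by
  have hZ : MeasurableSet {x | ρ₀ x = 0} := hρ₀m (measurableSet_singleton 0)
  have hA : ∀ k : ℕ, MeasurableSet {x | 0 < ρ₀ x ∧ |log (ρ₀ x)| ≤ k} := fun k =>
    (measurableSet_lt measurable_const hρ₀m).inter
      (measurableSet_le (by fun_prop : Measurable fun x => |log (ρ₀ x)|) measurable_const)
  refine tendstoInMeasure_of_forall_restrict (fun k => hZ.union (hA k)) (fun j k hjk => ?_) ?_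
    fun k => ?_
  · exact union_subset_union_right _ fun x hx => ⟨hx.1, hx.2.trans (by exact_mod_cast hjk)⟩
  · refine eq_univ_of_forall fun x => mem_iUnion.2 ?_
    obtain ⟨k, hk⟩ := exists_nat_ge |log (ρ₀ x)|
    exact ⟨k, (hρ₀nn x).eq_or_lt.elim (fun h => Or.inl h.symm) fun h => Or.inr ⟨h, hk⟩⟩
  · exact (hρ.tendstoInMeasure_restrict_of_eq_zero hnn hi hZ fun _ hx => hx).restrict_union
      (hρ.tendstoInMeasure_restrict_of_abs_log_le hlog hg hnn hρ₀m hi hli hρ₀i hρ₀li (hA k)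
        fun _ hx => hx)

end TendstoWeakly

end MeasureTheory

theorem stmt_18_general {X : Type*} [MeasurableSpace X] (μ : Measure X) [IsFiniteMeasure μ]
    (ρn : ℕ → X → ℝ) (ρ g : X → ℝ)
    (hnn : ∀ n x, 0 ≤ ρn n x) (hρnn : ∀ x, 0 ≤ ρ x)
    (hρm : Measurable ρ)
    (hi : ∀ n, Integrable (ρn n) μ)
    (hli : ∀ n, Integrable (fun x => ρn n x * Real.log (ρn n x)) μ)
    (hρi : Integrable ρ μ)
    (hρli : Integrable (fun x => ρ x * Real.log (ρ x)) μ)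
    (hgi : Integrable g μ)
    (hweak : ∀ φ : X → ℝ, Measurable φ → (∃ B : ℝ, ∀ x, |φ x| ≤ B) →
      Tendsto (fun n => ∫ x, ρn n x * φ x ∂μ) atTop (nhds (∫ x, ρ x * φ x ∂μ)))
    (hweaklog : ∀ φ : X → ℝ, Measurable φ → (∃ B : ℝ, ∀ x, |φ x| ≤ B) →
      Tendsto (fun n => ∫ x, (ρn n x * Real.log (ρn n x)) * φ x ∂μ) atTop
        (nhds (∫ x, g x * φ x ∂μ))) :
    (∀ᵐ x ∂μ, ρ x * Real.log (ρ x) ≤ g x) ∧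
    ((∫ x, g x ∂μ = ∫ x, ρ x * Real.log (ρ x) ∂μ) →
      TendstoInMeasure μ ρn atTop ρ) := by
  have hρ : TendstoWeakly μ ρn atTop ρ := hweak
  have hlog : TendstoWeakly μ (fun n x => ρn n x * log (ρn n x)) atTop g := hweaklog
  have hle := hρ.ae_mul_log_le hlog hnn hρnn hi hli hρi hgi
  refine ⟨hle, fun hint => ?_⟩
  have hg : g =ᵐ[μ] fun x => ρ x * log (ρ x) :=
    ((integral_eq_iff_of_ae_le hρli hgi hle).1 hint.symm).symm
  exact hρ.tendstoInMeasure_of_ae_eq_mul_log hlog hg hnn hρnn hρm hi hli hρi hρli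

theorem stmt_18 {X : Type*} [MeasurableSpace X] (μ : Measure X) [IsFiniteMeasure μ]
    (ρn : ℕ → X → ℝ) (ρ g : X → ℝ)
    (hnn : ∀ n x, 0 ≤ ρn n x) (hρnn : ∀ x, 0 ≤ ρ x)
    (hm : ∀ n, Measurable (ρn n)) (hρm : Measurable ρ) (hgm : Measurable g)
    (hi : ∀ n, Integrable (ρn n) μ)
    (hli : ∀ n, Integrable (fun x => ρn n x * Real.log (ρn n x)) μ)
    (hρi : Integrable ρ μ)
    (hρli : Integrable (fun x => ρ x * Real.log (ρ x)) μ)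
    (hgi : Integrable g μ)
    (hweak : ∀ φ : X → ℝ, Measurable φ → (∃ B : ℝ, ∀ x, |φ x| ≤ B) →
      Tendsto (fun n => ∫ x, ρn n x * φ x ∂μ) atTop (nhds (∫ x, ρ x * φ x ∂μ)))
    (hweaklog : ∀ φ : X → ℝ, Measurable φ → (∃ B : ℝ, ∀ x, |φ x| ≤ B) →
      Tendsto (fun n => ∫ x, (ρn n x * Real.log (ρn n x)) * φ x ∂μ) atTop
        (nhds (∫ x, g x * φ x ∂μ))) :
    (∀ᵐ x ∂μ, ρ x * Real.log (ρ x) ≤ g x) ∧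
    ((∫ x, g x ∂μ = ∫ x, ρ x * Real.log (ρ x) ∂μ) →
      TendstoInMeasure μ ρn atTop ρ) :=
  stmt_18_general μ ρn ρ g hnn hρnn hρm hi hli hρi hρli hgi hweak hweaklog
end
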